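/- arXiv:2407.07364 — 2 statements merged into one kernel-verified Lean document; each statement's English description precedes it below -/
import Mathlib

section
/- (Optimality of a policy-iteration fixed point.) Let π* be a full-support policy such that for every full-support policy π and every state s the improvement objective satisfies J_{Q^{π*}}(π*, s) ≤ J_{Q^{π*}}(π, s). Then Q^{π*}(s,a) ≥ Q^{π}(s,a) for every full-support policy π and all (s,a) ∈ S × A. -/
open scoped BigOperators

variable {S A : Type*}

/-- A policy has full support if it assigns positive probability to every action
in every state. -/
def FullSupport (π : S → PMF A) : Prop :=
  ∀ s a, 0 < ((π s) a).toReal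

/-- The augmented Bellman operator of TransRL:
`(T_π Q)(s,a) = r s a + γ · Σ_{s'} p(s'|s,a) · Σ_{a'} π(a'|s') ·
  (Q(s',a') + α · log(π_TC(a'|s') / π(a'|s')))`,
where terms with `π(a'|s') = 0` contribute `0`. -/
noncomputable def augBellman [Fintype S] [Fintype A]
    (p : S → A → PMF S) (r : S → A → ℝ) (γ α : ℝ) (πTC : S → PMF A)
    (π : S → PMF A) (Q : S → A → ℝ) : S → A → ℝ :=
  fun s a => r s a + γ * ∑ s' : S, ((p s a) s').toReal *
    ∑ a' : A, ((π s') a').toReal *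
      (Q s' a' + α * Real.log (((πTC s') a').toReal / ((π s') a').toReal))

/-- The per-state policy improvement objective
`J_Q(π, s) = Σ_a π(a|s) · (log π(a|s) − log π_TC(a|s) − Q(s,a)/α)`,
with terms where `π(a|s) = 0` contributing `0`. -/
noncomputable def impObj [Fintype A] (πTC : S → PMF A) (α : ℝ)
    (Q : S → A → ℝ) (π : S → PMF A) (s : S) : ℝ :=
  ∑ a : A, ((π s) a).toReal *
    (Real.log ((π s) a).toReal - Real.log (((πTC s) a).toReal) - Q s a / α)

/-- The auxiliary state value
`V(s) = Σ_a π(a|s) · (Q(s,a) + α · log(π_TC(a|s)/π(a|s)))`. -/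
noncomputable def auxValue [Fintype A] (πTC : S → PMF A) (α : ℝ)
    (Q : S → A → ℝ) (π : S → PMF A) (s : S) : ℝ :=
  ∑ a : A, ((π s) a).toReal *
    (Q s a + α * Real.log (((πTC s) a).toReal / ((π s) a).toReal))

/-- The soft (SAC) Bellman operator:
`(T^H_π Q)(s,a) = r s a + γ · Σ_{s'} p(s'|s,a) · Σ_{a'} π(a'|s') ·
  (Q(s',a') − α · log π(a'|s'))`. -/
noncomputable def softBellman [Fintype S] [Fintype A]
    (p : S → A → PMF S) (r : S → A → ℝ) (γ α : ℝ)
    (π : S → PMF A) (Q : S → A → ℝ) : S → A → ℝ :=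
  fun s a => r s a + γ * ∑ s' : S, ((p s a) s').toReal *
    ∑ a' : A, ((π s') a').toReal * (Q s' a' - α * Real.log (((π s') a').toReal))

/-!
Since `α > 0` and both `π_TC` and `π*` have full support, the auxiliary value
`Σ_a π(a|s) (Q(s,a) + α log(π_TC(a|s)/π(a|s)))` equals `-α · J_Q(π, s)`, so `π*` maximises it
for `Q = Q^{π*}`. Hence `T_π Q^{π*} ≤ T_{π*} Q^{π*} = Q^{π*}`: the function `Q^{π*}` is a
supersolution of the `γ`-contractive, monotone operator `T_π`, and therefore dominates its fixed
point `Q^π`.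
-/

open Finset

theorem PMF.sum_toReal_eq_one {α : Type*} [Fintype α] (p : PMF α) :
    ∑ a, (p a).toReal = 1 := by
  rw [← ENNReal.toReal_sum fun a _ => p.apply_ne_top a,
    ← tsum_fintype (L := SummationFilter.unconditional _), p.tsum_coe, ENNReal.toReal_one]

theorem PMF.sum_toReal_mul_le {α : Type*} [Fintype α] (p : PMF α) {f : α → ℝ} {M : ℝ}
    (hf : ∀ a, f a ≤ M) : ∑ a, (p a).toReal * f a ≤ M :=
  calc ∑ a, (p a).toReal * f a
      ≤ ∑ a, (p a).toReal * M := sum_le_sum fun a _ => by gcongr; exact hf a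
    _ = M := by rw [← sum_mul, p.sum_toReal_eq_one, one_mul]

theorem auxValue_eq_neg_mul_impObj [Fintype A] {πTC : S → PMF A} {α : ℝ} (hα : α ≠ 0)
    (hTC : FullSupport πTC) (Q : S → A → ℝ) {π : S → PMF A} (hπ : FullSupport π) (s : S) :
    auxValue πTC α Q π s = -α * impObj πTC α Q π s := by
  rw [auxValue, impObj, mul_sum]
  refine sum_congr rfl fun a _ => ?_
  rw [Real.log_div (hTC s a).ne' (hπ s a).ne']
  field_simp
  ring

section Bellman

variable [Fintype S] [Fintype A] (p : S → A → PMF S) (r : S → A → ℝ) {γ : ℝ} (α : ℝ)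
  (πTC : S → PMF A)

theorem augBellman_eq_add_auxValue (π : S → PMF A) (Q : S → A → ℝ) (s : S) (a : A) :
    augBellman p r γ α πTC π Q s a =
      r s a + γ * ∑ s', (p s a s').toReal * auxValue πTC α Q π s' :=
  rfl

theorem augBellman_le_of_auxValue_le (hγ : 0 ≤ γ) {π π' : S → PMF A} {Q : S → A → ℝ}
    (hV : ∀ s, auxValue πTC α Q π s ≤ auxValue πTC α Q π' s) (s : S) (a : A) :
    augBellman p r γ α πTC π Q s a ≤ augBellman p r γ α πTC π' Q s a := by
  simp only [augBellman_eq_add_auxValue]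
  gcongr with s' _
  exact hV s'

theorem augBellman_sub_augBellman (π : S → PMF A) (Q Q' : S → A → ℝ) (s : S) (a : A) :
    augBellman p r γ α πTC π Q s a - augBellman p r γ α πTC π Q' s a =
      γ * ∑ s', (p s a s').toReal * ∑ a', (π s' a').toReal * (Q s' a' - Q' s' a') := by
  simp only [augBellman, add_sub_add_left_eq_sub, ← mul_sub, ← sum_sub_distrib]
  congr 1
  refine sum_congr rfl fun s' _ => congrArg _ (sum_congr rfl fun a' _ => ?_)
  ring

theorem augBellman_sub_le (hγ : 0 ≤ γ) (π : S → PMF A) {Q Q' : S → A → ℝ} {M : ℝ}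
    (hM : ∀ s a, Q s a - Q' s a ≤ M) (s : S) (a : A) :
    augBellman p r γ α πTC π Q s a - augBellman p r γ α πTC π Q' s a ≤ γ * M := by
  rw [augBellman_sub_augBellman]
  gcongr
  exact (p s a).sum_toReal_mul_le fun s' => (π s').sum_toReal_mul_le fun a' => hM s' a'

theorem le_of_augBellman_le (hγ0 : 0 ≤ γ) (hγ1 : γ < 1) {π : S → PMF A} {Q Q' : S → A → ℝ}
    (hQ : augBellman p r γ α πTC π Q = Q) (hQ' : ∀ s a, augBellman p r γ α πTC π Q' s a ≤ Q' s a)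
    (s : S) (a : A) : Q s a ≤ Q' s a := by
  have : Nonempty (S × A) := ⟨(s, a)⟩
  obtain ⟨⟨s₀, a₀⟩, hmax⟩ := Finite.exists_max fun x : S × A => Q x.1 x.2 - Q' x.1 x.2
  set M := Q s₀ a₀ - Q' s₀ a₀
  have hcontract : ∀ s a, Q s a - Q' s a ≤ γ * M := fun s a =>
    calc Q s a - Q' s a
        ≤ augBellman p r γ α πTC π Q s a - augBellman p r γ α πTC π Q' s a := by
          rw [hQ]; linarith [hQ' s a]
      _ ≤ γ * M := augBellman_sub_le p r α πTC hγ0 π (fun s a => hmax (s, a)) s a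
  have hM : M ≤ 0 := by nlinarith [hcontract s₀ a₀]
  linarith [hmax (s, a)]

end Bellman

theorem policy_iteration_fixed_point_optimal_general [Fintype S] [Fintype A]
    (p : S → A → PMF S) (r : S → A → ℝ) (γ α : ℝ)
    (hγ0 : 0 ≤ γ) (hγ1 : γ < 1) (hα : 0 < α)
    (πTC : S → PMF A) (hTC : FullSupport πTC)
    (πstar : S → PMF A) (hstar : FullSupport πstar)
    (Qstar : S → A → ℝ) (hfixStar : augBellman p r γ α πTC πstar Qstar = Qstar)
    (hJ : ∀ π : S → PMF A, FullSupport π → ∀ s,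
      impObj πTC α Qstar πstar s ≤ impObj πTC α Qstar π s) :
    ∀ π : S → PMF A, FullSupport π →
      ∀ Qπ : S → A → ℝ, augBellman p r γ α πTC π Qπ = Qπ →
        ∀ s a, Qπ s a ≤ Qstar s a := by
  intro π hπ Qπ hfix
  have hV : ∀ s, auxValue πTC α Qstar π s ≤ auxValue πTC α Qstar πstar s := fun s => by
    rw [auxValue_eq_neg_mul_impObj hα.ne' hTC Qstar hπ,
      auxValue_eq_neg_mul_impObj hα.ne' hTC Qstar hstar]
    exact mul_le_mul_of_nonpos_left (hJ π hπ s) (neg_nonpos.mpr hα.le)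
  have hsuper : ∀ s a, augBellman p r γ α πTC π Qstar s a ≤ Qstar s a := fun s a => by
    conv_rhs => rw [← hfixStar]
    exact augBellman_le_of_auxValue_le p r α πTC hγ0 hV s a
  exact le_of_augBellman_le p r α πTC hγ0 hγ1 hfix hsuper

theorem policy_iteration_fixed_point_optimal [Fintype S] [Fintype A] [Nonempty S] [Nonempty A]
    (p : S → A → PMF S) (r : S → A → ℝ) (γ α : ℝ)
    (hγ0 : 0 ≤ γ) (hγ1 : γ < 1) (hα : 0 < α)
    (πTC : S → PMF A) (hTC : FullSupport πTC)
    (πstar : S → PMF A) (hstar : FullSupport πstar)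
    (Qstar : S → A → ℝ) (hfixStar : augBellman p r γ α πTC πstar Qstar = Qstar)
    (hJ : ∀ π : S → PMF A, FullSupport π → ∀ s,
      impObj πTC α Qstar πstar s ≤ impObj πTC α Qstar π s) :
    ∀ π : S → PMF A, FullSupport π →
      ∀ Qπ : S → A → ℝ, augBellman p r γ α πTC π Qπ = Qπ →
        ∀ s a, Qπ s a ≤ Qstar s a :=
  policy_iteration_fixed_point_optimal_general p r γ α hγ0 hγ1 hα πTC hTC πstar hstar Qstar hfixStar
    hJ
end

section
/- (TransRL with uniform teacher equals SAC, value form.) Suppose π_TC s is the uniform PMF on A for every s, and let n = |A|. For a full-support policy π, let V^π(s) = Σ_a (π s a) · (Q^π(s,a) + α · log((π_TC s a)/(π s a))) be the TransRL auxiliary value and V^{π,H}(s) = Σ_a (π s a) · (Q^{π,H}(s,a) − α · log(π s a)) the SAC soft value, where Q^π and Q^{π,H} are the unique fixed points of the augmented and soft Bellman operators respectively. Then V^π(s) = V^{π,H}(s) − α · log n / (1 − γ) for every s; consequently, a full-support policy π maximizes V^π(s) simultaneously for all s over full-support policies if and only if it maximizes V^{π,H}(s) simultaneously for all s. -/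
/-!
For a uniform teacher, `log (π_TC / π) = -log n - log π`, so the augmented backup is the soft
backup shifted by the constant `-α log n`. Hence `Q^{π,H} - c` with `c = γ α log n / (1 - γ)` is a
fixed point of the augmented operator, and by uniqueness of that fixed point it is `Q^π`. The two
value functions then differ by the policy-independent constant `c + α log n = α log n / (1 - γ)`,
so they have the same maximizers.
-/

open scoped BigOperators

variable {S A : Type*}

open Finset

namespace PMF

variable {B : Type*} [Fintype B]

lemma sum_toReal_eq_one_s15 (q : PMF B) : ∑ b, (q b).toReal = 1 := by
  rw [← ENNReal.toReal_sum fun b _ => q.apply_ne_top b, ← tsum_fintype (L := .unconditional B),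
    q.tsum_coe, ENNReal.toReal_one]

lemma sum_toReal_mul_sub_const (q : PMF B) (f : B → ℝ) (c : ℝ) :
    ∑ b, (q b).toReal * (f b - c) = ∑ b, (q b).toReal * f b - c := by
  simp only [mul_sub, sum_sub_distrib, ← sum_mul, sum_toReal_eq_one_s15, one_mul]

lemma abs_sum_toReal_mul_le_norm (q : PMF B) (f : B → ℝ) :
    |∑ b, (q b).toReal * f b| ≤ ‖f‖ :=
  calc |∑ b, (q b).toReal * f b|
      ≤ ∑ b, (q b).toReal * ‖f‖ := by
        refine (abs_sum_le_sum_abs _ _).trans (sum_le_sum fun b _ => ?_)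
        rw [abs_mul, ENNReal.abs_toReal]
        exact mul_le_mul_of_nonneg_left (norm_le_pi_norm f b) ENNReal.toReal_nonneg
    _ = ‖f‖ := by rw [← sum_mul, sum_toReal_eq_one_s15, one_mul]

end PMF

noncomputable def softValue [Fintype A] (α : ℝ) (Q : S → A → ℝ) (π : S → PMF A) (s : S) : ℝ :=
  ∑ a : A, ((π s) a).toReal * (Q s a - α * Real.log ((π s) a).toReal)

lemma auxValue_sub_auxValue [Fintype A] (πTC π : S → PMF A) (α : ℝ) (Q₁ Q₂ : S → A → ℝ) (s : S) :
    auxValue πTC α Q₁ π s - auxValue πTC α Q₂ π s =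
      ∑ a, ((π s) a).toReal * (Q₁ s a - Q₂ s a) := by
  simp only [auxValue, ← sum_sub_distrib, ← mul_sub, add_sub_add_right_eq_sub]

section Bellman

variable [Fintype S] [Fintype A] (p : S → A → PMF S) (r : S → A → ℝ) (γ α : ℝ)
  (πTC π : S → PMF A)

lemma augBellman_apply (Q : S → A → ℝ) (s : S) (a : A) :
    augBellman p r γ α πTC π Q s a =
      r s a + γ * ∑ s', ((p s a) s').toReal * auxValue πTC α Q π s' :=
  rfl

lemma softBellman_apply (Q : S → A → ℝ) (s : S) (a : A) :
    softBellman p r γ α π Q s a =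
      r s a + γ * ∑ s', ((p s a) s').toReal * softValue α Q π s' :=
  rfl

lemma norm_augBellman_sub_le {γ : ℝ} (hγ : 0 ≤ γ) (Q₁ Q₂ : S → A → ℝ) :
    ‖augBellman p r γ α πTC π Q₁ - augBellman p r γ α πTC π Q₂‖ ≤ γ * ‖Q₁ - Q₂‖ := by
  refine pi_norm_le_iff_of_nonneg (by positivity) |>.2 fun s =>
    pi_norm_le_iff_of_nonneg (by positivity) |>.2 fun a => ?_
  have hstep : ∀ s', |auxValue πTC α Q₁ π s' - auxValue πTC α Q₂ π s'| ≤ ‖Q₁ - Q₂‖ :=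
    fun s' => by
      rw [auxValue_sub_auxValue]
      exact ((π s').abs_sum_toReal_mul_le_norm _).trans (norm_le_pi_norm (Q₁ - Q₂) s')
  have hdiff : augBellman p r γ α πTC π Q₁ s a - augBellman p r γ α πTC π Q₂ s a =
      γ * ∑ s', ((p s a) s').toReal *
        (auxValue πTC α Q₁ π s' - auxValue πTC α Q₂ π s') := by
    simp only [augBellman_apply, mul_sub, sum_sub_distrib]
    ring
  rw [Pi.sub_apply, Pi.sub_apply, Real.norm_eq_abs, hdiff, abs_mul, abs_of_nonneg hγ]
  refine mul_le_mul_of_nonneg_left ?_ hγ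
  exact ((p s a).abs_sum_toReal_mul_le_norm _).trans
    (pi_norm_le_iff_of_nonneg (norm_nonneg _) |>.2 fun s' => hstep s')

lemma augBellman_fixedPoint_unique {γ : ℝ} (hγ0 : 0 ≤ γ) (hγ1 : γ < 1) {Q₁ Q₂ : S → A → ℝ}
    (h₁ : augBellman p r γ α πTC π Q₁ = Q₁) (h₂ : augBellman p r γ α πTC π Q₂ = Q₂) :
    Q₁ = Q₂ := by
  have h := norm_augBellman_sub_le p r α πTC π hγ0 Q₁ Q₂
  rw [h₁, h₂] at h
  have hzero : ‖Q₁ - Q₂‖ = 0 := by nlinarith [norm_nonneg (Q₁ - Q₂)]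
  exact sub_eq_zero.1 (norm_eq_zero.1 hzero)

end Bellman

section UniformTeacher

variable [Fintype A] {πTC π : S → PMF A}

lemma auxValue_eq_softValue_sub_of_uniform
    (hTCu : ∀ s a, ((πTC s) a).toReal = 1 / (Fintype.card A : ℝ)) (hπ : FullSupport π)
    (α : ℝ) (Q : S → A → ℝ) (s : S) :
    auxValue πTC α Q π s = softValue α Q π s - α * Real.log (Fintype.card A) := by
  have hlog : ∀ a, Real.log (((πTC s) a).toReal / ((π s) a).toReal) =
      -Real.log (Fintype.card A) - Real.log ((π s) a).toReal := fun a => by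
    have hn : (0 : ℝ) < Fintype.card A := Nat.cast_pos.2 (Fintype.card_pos_iff.2 ⟨a⟩)
    rw [hTCu, one_div, Real.log_div (inv_ne_zero hn.ne') (hπ s a).ne', Real.log_inv]
  rw [softValue, ← PMF.sum_toReal_mul_sub_const]
  refine sum_congr rfl fun a _ => ?_
  rw [hlog]
  ring

lemma softValue_sub_const (α : ℝ) (Q : S → A → ℝ) (c : ℝ) (s : S) :
    softValue α (fun s a => Q s a - c) π s = softValue α Q π s - c := by
  rw [softValue, softValue, ← PMF.sum_toReal_mul_sub_const]
  refine sum_congr rfl fun a _ => ?_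
  ring

lemma augBellman_softFixedPoint_sub [Fintype S] (p : S → A → PMF S) (r : S → A → ℝ) {γ : ℝ}
    (hγ1 : γ < 1) (α : ℝ) (hTCu : ∀ s a, ((πTC s) a).toReal = 1 / (Fintype.card A : ℝ))
    (hπ : FullSupport π) {Q : S → A → ℝ} (hQ : softBellman p r γ α π Q = Q) :
    let c := γ * α * Real.log (Fintype.card A) / (1 - γ)
    augBellman p r γ α πTC π (fun s a => Q s a - c) = fun s a => Q s a - c := by
  intro c
  have hc : γ * (c + α * Real.log (Fintype.card A)) = c := by
    simp only [c]
    field_simp [(sub_pos.2 hγ1).ne']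
    ring
  funext s a
  have hsoft := congrFun (congrFun hQ s) a
  rw [softBellman_apply] at hsoft
  simp only [augBellman_apply, auxValue_eq_softValue_sub_of_uniform hTCu hπ,
    softValue_sub_const, sub_sub, PMF.sum_toReal_mul_sub_const]
  linear_combination hsoft - hc

end UniformTeacher

theorem uniform_teacher_value_eq_sac_value_general [Fintype S] [Fintype A]
    (p : S → A → PMF S) (r : S → A → ℝ) (γ α : ℝ)
    (hγ0 : 0 ≤ γ) (hγ1 : γ < 1)
    (πTC : S → PMF A)
    (hTCu : ∀ s a, ((πTC s) a).toReal = 1 / (Fintype.card A : ℝ))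
    (Qaug Qsoft : (S → PMF A) → S → A → ℝ)
    (hQaug : ∀ π : S → PMF A, FullSupport π →
      augBellman p r γ α πTC π (Qaug π) = Qaug π)
    (hQsoft : ∀ π : S → PMF A, FullSupport π →
      softBellman p r γ α π (Qsoft π) = Qsoft π) :
    (∀ π : S → PMF A, FullSupport π → ∀ s,
      auxValue πTC α (Qaug π) π s =
        (∑ a : A, ((π s) a).toReal *
            (Qsoft π s a - α * Real.log (((π s) a).toReal))) -
          α * Real.log (Fintype.card A : ℝ) / (1 - γ)) ∧
    ∀ π0 : S → PMF A, FullSupport π0 →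
      ((∀ π : S → PMF A, FullSupport π → ∀ s,
          auxValue πTC α (Qaug π) π s ≤ auxValue πTC α (Qaug π0) π0 s) ↔
        (∀ π : S → PMF A, FullSupport π → ∀ s,
          (∑ a : A, ((π s) a).toReal *
              (Qsoft π s a - α * Real.log (((π s) a).toReal))) ≤
            ∑ a : A, ((π0 s) a).toReal *
              (Qsoft π0 s a - α * Real.log (((π0 s) a).toReal)))) := by
  have hval : ∀ π : S → PMF A, FullSupport π → ∀ s,
      auxValue πTC α (Qaug π) π s =
        softValue α (Qsoft π) π s - α * Real.log (Fintype.card A) / (1 - γ) := by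
    intro π hπ s
    have hQ := augBellman_fixedPoint_unique p r α πTC π hγ0 hγ1 (hQaug π hπ)
      (augBellman_softFixedPoint_sub p r hγ1 α hTCu hπ (hQsoft π hπ))
    rw [hQ, auxValue_eq_softValue_sub_of_uniform hTCu hπ, softValue_sub_const]
    field_simp [(sub_pos.2 hγ1).ne']
    ring
  refine ⟨hval, fun π0 hπ0 => forall₂_congr fun π hπ => forall_congr' fun s => ?_⟩
  rw [hval π hπ, hval π0 hπ0, sub_le_sub_iff_right]
  rfl

theorem uniform_teacher_value_eq_sac_value [Fintype S] [Fintype A] [Nonempty S] [Nonempty A]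
    (p : S → A → PMF S) (r : S → A → ℝ) (γ α : ℝ)
    (hγ0 : 0 ≤ γ) (hγ1 : γ < 1) (hα : 0 < α)
    (πTC : S → PMF A)
    (hTCu : ∀ s a, ((πTC s) a).toReal = 1 / (Fintype.card A : ℝ))
    (Qaug Qsoft : (S → PMF A) → S → A → ℝ)
    (hQaug : ∀ π : S → PMF A, FullSupport π →
      augBellman p r γ α πTC π (Qaug π) = Qaug π)
    (hQsoft : ∀ π : S → PMF A, FullSupport π →
      softBellman p r γ α π (Qsoft π) = Qsoft π) :
    (∀ π : S → PMF A, FullSupport π → ∀ s,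
      auxValue πTC α (Qaug π) π s =
        (∑ a : A, ((π s) a).toReal *
            (Qsoft π s a - α * Real.log (((π s) a).toReal))) -
          α * Real.log (Fintype.card A : ℝ) / (1 - γ)) ∧
    ∀ π0 : S → PMF A, FullSupport π0 →
      ((∀ π : S → PMF A, FullSupport π → ∀ s,
          auxValue πTC α (Qaug π) π s ≤ auxValue πTC α (Qaug π0) π0 s) ↔
        (∀ π : S → PMF A, FullSupport π → ∀ s,
          (∑ a : A, ((π s) a).toReal *
              (Qsoft π s a - α * Real.log (((π s) a).toReal))) ≤
            ∑ a : A, ((π0 s) a).toReal *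
              (Qsoft π0 s a - α * Real.log (((π0 s) a).toReal)))) :=
  uniform_teacher_value_eq_sac_value_general p r γ α hγ0 hγ1 πTC hTCu Qaug Qsoft hQaug hQsoft
end
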